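/- For every integer s ≥ 2, ζ_E(2s) = ((-1)^s π^{2s} / P(2s, 2s-1)) · ( 1/((2s-1)(2s+1)) − ∑_{k=1}^{s-1} (-1)^k ζ_E(2k)/π^{2k} · (P(2s, 2k-1) − P(2s-2, 2k-1)) ), where P(n, r) = n!/(n-r)! and ζ_E is the Euler zeta function. -/

import Mathlib

/-! The Taylor coefficients of `t / sinh t` are `aₙ = 2ⁿ Bₙ(1/2) / n!`, so the Fourier expansion of
the Bernoulli polynomials at `x = 1/2` gives `ζ_E(2k) = (-1)ᵏ π²ᵏ a₂ₖ / 2`. Comparing coefficients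
of `t²ᵐ⁺¹` in `(t / sinh t) · (eᵗ - e⁻ᵗ) = 2t` gives `∑_{k ≤ m} a₂ₖ P(2m+1, 2k) = 0` for `m ≥ 1`. As
`a₀ = 1` and `P(2m+1, 2k) = (2m+1) P(2m, 2k-1)`, the instances `m = s` and `m = s - 1` determine
`∑_{k=1}^{s} a₂ₖ P(2s, 2k-1)` and `∑_{k=1}^{s-1} a₂ₖ P(2s-2, 2k-1)`; their difference is the
recurrence. -/

open Real

noncomputable def eulerZeta (s : ℕ) : ℝ := ∑' n : ℕ, (-1 : ℝ) ^ ((n + 1) - 1) / (n + 1 : ℝ) ^ s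

open Finset PowerSeries
open scoped Nat

theorem Finset.sum_range_two_mul {M : Type*} [AddCommMonoid M] (f : ℕ → M) (n : ℕ) :
    ∑ i ∈ range (2 * n), f i = ∑ k ∈ range n, (f (2 * k) + f (2 * k + 1)) := by
  induction n with
  | zero => simp
  | succ n ih =>
    rw [mul_add, mul_one, sum_range_succ, sum_range_succ, sum_range_succ, ih, add_assoc]

noncomputable def xDivSinhCoeff (n : ℕ) : ℝ :=
  2 ^ n * (Polynomial.map (algebraMap ℚ ℝ) (Polynomial.bernoulli n)).eval (1 / 2) / n !

theorem xDivSinhCoeff_zero : xDivSinhCoeff 0 = 1 := by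
  simp [xDivSinhCoeff]

theorem mk_xDivSinhCoeff_mul_exp_sub_exp_neg :
    mk xDivSinhCoeff * (exp ℝ - evalNegHom (exp ℝ)) = 2 * X := by
  have hgen :=
    congrArg (rescale (2 : ℝ)) (Polynomial.bernoulli_generating_function (A := ℝ) (1 / 2))
  have hmk : rescale (2 : ℝ) (mk fun n => Polynomial.aeval (1 / 2 : ℝ)
      ((1 / n ! : ℚ) • Polynomial.bernoulli n)) = mk xDivSinhCoeff := by
    ext n
    simp only [one_div, map_smul, Rat.smul_def, Rat.cast_inv, Rat.cast_natCast, coeff_rescale,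
      coeff_mk, xDivSinhCoeff, Polynomial.eval_map_algebraMap]
    ring
  rw [map_mul, hmk, map_sub, map_one, map_mul, rescale_X, rescale_rescale] at hgen
  calc mk xDivSinhCoeff * (exp ℝ - evalNegHom (exp ℝ))
      = mk xDivSinhCoeff * (rescale 2 (exp ℝ) - 1) * evalNegHom (exp ℝ) := by
        have h : rescale (2 : ℝ) (exp ℝ) * evalNegHom (exp ℝ) = exp ℝ := by
          rw [evalNegHom, exp_mul_exp_eq_exp_add]
          norm_num [rescale_one]
        rw [mul_assoc, sub_mul, h, one_mul]
    _ = 2 * X := by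
        rw [hgen, mul_assoc, show (1 / 2 * 2 : ℝ) = 1 by norm_num, rescale_one, RingHom.id_apply,
          exp_mul_exp_neg_eq_one, mul_one, map_ofNat]

theorem sum_range_xDivSinhCoeff_mul_descFactorial {m : ℕ} (hm : 1 ≤ m) :
    ∑ k ∈ range (m + 1), xDivSinhCoeff (2 * k) * (2 * m + 1).descFactorial (2 * k) = 0 := by
  have h := congrArg (coeff (2 * m + 1)) mk_xDivSinhCoeff_mul_exp_sub_exp_neg
  rw [coeff_mul, Nat.sum_antidiagonal_eq_sum_range_succ_mk,
    show (2 * m + 1).succ = 2 * (m + 1) by omega, sum_range_two_mul] at h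
  simp only [evalNegHom, coeff_mk, map_sub, coeff_rescale, coeff_exp] at h
  have hterm : ∀ k ∈ range (m + 1),
      xDivSinhCoeff (2 * k) * (algebraMap ℚ ℝ (1 / (2 * m + 1 - 2 * k)!)
          - (-1) ^ (2 * m + 1 - 2 * k) * algebraMap ℚ ℝ (1 / (2 * m + 1 - 2 * k)!))
        + xDivSinhCoeff (2 * k + 1) * (algebraMap ℚ ℝ (1 / (2 * m + 1 - (2 * k + 1))!)
          - (-1) ^ (2 * m + 1 - (2 * k + 1)) * algebraMap ℚ ℝ (1 / (2 * m + 1 - (2 * k + 1))!))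
      = 2 / (2 * m + 1)! * (xDivSinhCoeff (2 * k) * (2 * m + 1).descFactorial (2 * k)) := by
    intro k hk
    have hk : k ≤ m := Nat.lt_succ_iff.mp (mem_range.mp hk)
    rw [Odd.neg_one_pow ⟨m - k, by omega⟩, Even.neg_one_pow ⟨m - k, by omega⟩,
      ← Nat.factorial_mul_descFactorial (show 2 * k ≤ 2 * m + 1 by omega)]
    have hP : ((2 * m + 1).descFactorial (2 * k) : ℝ) ≠ 0 :=
      Nat.cast_ne_zero.mpr (Nat.descFactorial_pos.mpr (by omega)).ne'
    push_cast
    field_simp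
    ring
  rw [sum_congr rfl hterm, ← mul_sum, ← map_ofNat C, coeff_succ_mul_X, coeff_C,
    if_neg (by omega)] at h
  exact (mul_eq_zero.mp h).resolve_left (by positivity)

theorem sum_Icc_xDivSinhCoeff_mul_descFactorial {m : ℕ} (hm : 1 ≤ m) :
    ∑ k ∈ Icc 1 m, xDivSinhCoeff (2 * k) * (2 * m).descFactorial (2 * k - 1) =
      -1 / (2 * m + 1) := by
  have h := sum_range_xDivSinhCoeff_mul_descFactorial hm
  have hterm : ∀ k ∈ range m, xDivSinhCoeff (2 * (k + 1)) * (2 * m + 1).descFactorial (2 * (k + 1))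
      = (2 * m + 1) * (xDivSinhCoeff (2 * (1 + k)) * (2 * m).descFactorial (2 * (1 + k) - 1)) := by
    intro k _
    have hP : (2 * m + 1).descFactorial (2 * (k + 1)) =
        (2 * m + 1) * (2 * m).descFactorial (2 * k + 1) :=
      Nat.succ_descFactorial_succ _ _
    rw [hP, add_comm 1 k, show 2 * (k + 1) - 1 = 2 * k + 1 by omega]
    push_cast
    ring
  rw [sum_range_succ', sum_congr rfl hterm, ← mul_sum] at h
  rw [mul_zero, xDivSinhCoeff_zero, Nat.descFactorial_zero, Nat.cast_one, one_mul] at h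
  rw [show Icc 1 m = Ico 1 (m + 1) from rfl, sum_Ico_eq_sum_range, Nat.add_sub_cancel]
  field_simp
  linarith

theorem xDivSinhCoeff_recurrence {s : ℕ} (hs : 2 ≤ s) :
    xDivSinhCoeff (2 * s) * (2 * s).descFactorial (2 * s - 1) =
      2 / ((2 * s - 1) * (2 * s + 1)) - ∑ k ∈ Icc 1 (s - 1), xDivSinhCoeff (2 * k) *
        ((2 * s).descFactorial (2 * k - 1) - (2 * s - 2).descFactorial (2 * k - 1) : ℝ) := by
  obtain ⟨t, rfl⟩ : ∃ t, s = t + 1 := ⟨s - 1, by omega⟩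
  have hsum_s := sum_Icc_xDivSinhCoeff_mul_descFactorial (m := t + 1) (by omega)
  have hsum_t := sum_Icc_xDivSinhCoeff_mul_descFactorial (m := t) (by omega)
  rw [sum_Icc_succ_top (by omega)] at hsum_s
  rw [Nat.add_sub_cancel, show 2 * (t + 1) - 2 = 2 * t by omega]
  simp only [mul_sub, sum_sub_distrib]
  have hsplit : (2 : ℝ) / ((2 * (t + 1 : ℕ) - 1) * (2 * (t + 1 : ℕ) + 1))
      = 1 / (2 * t + 1) - 1 / (2 * (t + 1 : ℕ) + 1) := by
    have : (2 * t + 1 : ℝ) ≠ 0 := by positivity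
    push_cast
    rw [show 2 * ((t : ℝ) + 1) - 1 = 2 * t + 1 by ring]
    field_simp
    ring
  linear_combination hsum_s - hsum_t - hsplit

theorem eulerZeta_two_mul {k : ℕ} (hk : k ≠ 0) :
    eulerZeta (2 * k) = (-1) ^ k * π ^ (2 * k) * xDivSinhCoeff (2 * k) / 2 := by
  have hcos := hasSum_one_div_nat_pow_mul_cos hk (x := 1 / 2) ⟨by norm_num, by norm_num⟩
  simp only [show ∀ n : ℕ, 2 * π * n * (1 / 2) = n * π from fun n => by ring,
    cos_nat_mul_pi] at hcos
  have h := ((hasSum_nat_add_iff' 1).mpr hcos).neg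
  simp only [sum_range_one, Nat.cast_zero, zero_pow (show 2 * k ≠ 0 by omega), div_zero, zero_mul,
    sub_zero] at h
  calc eulerZeta (2 * k) = ∑' n : ℕ, -(1 / ((n + 1 : ℕ) : ℝ) ^ (2 * k) * (-1) ^ (n + 1)) := by
        refine tsum_congr fun n => ?_
        rw [Nat.add_sub_cancel, pow_succ]
        push_cast
        ring
    _ = (-1) ^ k * π ^ (2 * k) * xDivSinhCoeff (2 * k) / 2 := by
        rw [h.tsum_eq, xDivSinhCoeff]
        ring

theorem neg_one_pow_mul_eulerZeta_two_mul_div {k : ℕ} (hk : k ≠ 0) :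
    (-1) ^ k * eulerZeta (2 * k) / π ^ (2 * k) = xDivSinhCoeff (2 * k) / 2 := by
  have hsq : (-1 : ℝ) ^ k * (-1) ^ k = 1 := by rw [← mul_pow, neg_one_mul, neg_neg, one_pow]
  calc _ = (-1 : ℝ) ^ k * (-1) ^ k * (π ^ (2 * k) * xDivSinhCoeff (2 * k) / 2) / π ^ (2 * k) := by
        rw [eulerZeta_two_mul hk]
        ring
    _ = xDivSinhCoeff (2 * k) / 2 := by
        rw [hsq, one_mul]
        field_simp

theorem recurrence_formula (s : ℕ) (hs : 2 ≤ s) :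
    eulerZeta (2 * s) =
      (-1 : ℝ) ^ s * π ^ (2 * s) / ((2 * s).descFactorial (2 * s - 1) : ℝ) *
        (1 / ((2 * (s : ℝ) - 1) * (2 * (s : ℝ) + 1)) -
          ∑ k ∈ Finset.Icc 1 (s - 1),
            (-1 : ℝ) ^ k * eulerZeta (2 * k) / π ^ (2 * k) *
              (((2 * s).descFactorial (2 * k - 1) : ℝ)
                - ((2 * s - 2).descFactorial (2 * k - 1) : ℝ))) := by
  have hsum : ∑ k ∈ Icc 1 (s - 1), xDivSinhCoeff (2 * k) / 2 *
        (((2 * s).descFactorial (2 * k - 1) : ℝ) - ((2 * s - 2).descFactorial (2 * k - 1) : ℝ))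
      = 1 / ((2 * (s : ℝ) - 1) * (2 * (s : ℝ) + 1))
        - xDivSinhCoeff (2 * s) * (2 * s).descFactorial (2 * s - 1) / 2 := by
    simp only [div_mul_eq_mul_div, ← sum_div]
    rw [xDivSinhCoeff_recurrence hs]
    ring
  have hP : ((2 * s).descFactorial (2 * s - 1) : ℝ) ≠ 0 :=
    Nat.cast_ne_zero.mpr (Nat.descFactorial_pos.mpr (by omega)).ne'
  rw [sum_congr rfl fun k hk => by
      rw [neg_one_pow_mul_eulerZeta_two_mul_div (Nat.one_le_iff_ne_zero.mp (mem_Icc.mp hk).1)],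
    hsum, sub_sub_cancel, eulerZeta_two_mul (by omega)]
  field_simp
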